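/- arXiv:2304.04519 — 2 statements merged into one kernel-verified Lean document; each statement's English description precedes it below -/
import Mathlib

section
/- Let q ≥ 1 and n ≥ 1, and let x_1, …, x_n be points of S^q. Define B(κ) := (∫_{-1}^{1} e^{κ(t-1)} (1-t²)^{q/2-1} dt) / (∫_{-1}^{1} (1-t²)^{q/2-1} dt) and the smooth maximum statistic T(κ) := (2/n) Σ_{1 ≤ i < j ≤ n} e^{κ(⟨x_i, x_j⟩ - 1)} − (n−1) B(κ) for κ > 0. Then, as κ → 0⁺, (q+1)·((e^κ/κ)·T(κ) + 1) converges to the Rayleigh statistic R_n = ((q+1)/n) Σ_{i,j=1}^{n} ⟨x_i, x_j⟩. -/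
open MeasureTheory Filter Topology Real

noncomputable section

/-!
Since there are `n (n - 1) / 2` pairs `i < j`, the statistic can be written as
`T(κ) = (2 / n) ∑_{i<j} (e^{κ (⟪x i, x j⟫ - 1)} - B(κ))`. Now `B(0) = 1` and
`B'(0) = ∫ (t - 1) w / ∫ w = -1`, because the weight `w(t) = (1 - t²)^(q/2 - 1)` is even and
integrable for `q ≥ 1`. Hence `T(0) = 0`, each summand has derivative `⟪x i, x j⟫` at `0`, and
`(e^κ / κ) T(κ) → T'(0) = (2 / n) ∑_{i<j} ⟪x i, x j⟫`. For unit vectors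
`∑_{i,j} ⟪x i, x j⟫ = 2 ∑_{i<j} ⟪x i, x j⟫ + n`, which turns the limit into `R_n`.
-/

open Set Finset

theorem sum_sum_eq_two_nsmul_sum_lt_add_sum_diag {ι M : Type*} [Fintype ι] [LinearOrder ι]
    [AddCommMonoid M] (f : ι → ι → M) (hf : ∀ i j, f i j = f j i) :
    ∑ i, ∑ j, f i j = 2 • ∑ p ∈ univ.filter (fun p : ι × ι => p.1 < p.2), f p.1 p.2
      + ∑ i, f i i := by
  have hswap : ∑ p ∈ univ.filter (fun p : ι × ι => p.2 < p.1), f p.1 p.2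
      = ∑ p ∈ univ.filter (fun p : ι × ι => p.1 < p.2), f p.1 p.2 :=
    Finset.sum_equiv (Equiv.prodComm ι ι) (by simp) (fun p _ => hf _ _)
  have hdiag : ∑ p ∈ univ.filter (fun p : ι × ι => p.1 = p.2), f p.1 p.2 = ∑ i, f i i := by
    rw [← univ_product_univ, ← diag_eq_filter, sum_diag]
  calc ∑ i, ∑ j, f i j = ∑ p : ι × ι, f p.1 p.2 := (Fintype.sum_prod_type' f).symm
    _ = ∑ p : ι × ι, ((if p.1 < p.2 then f p.1 p.2 else 0) + (if p.2 < p.1 then f p.1 p.2 else 0)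
          + if p.1 = p.2 then f p.1 p.2 else 0) := by
      refine sum_congr rfl fun p _ => ?_
      rcases lt_trichotomy p.1 p.2 with h | h | h
      · simp [h, h.not_gt, h.ne]
      · simp [h]
      · simp [h, h.not_gt, h.ne']
    _ = _ := by
      rw [sum_add_distrib, sum_add_distrib, ← sum_filter, ← sum_filter, ← sum_filter, hswap,
        hdiag, two_nsmul]

theorem intervalIntegral.integral_eq_zero_of_odd {f : ℝ → ℝ} (hf : ∀ t, f (-t) = -f t) (a : ℝ) :
    ∫ t in -a..a, f t = 0 := by
  have h := intervalIntegral.integral_comp_neg (a := -a) (b := a) f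
  simp only [hf, intervalIntegral.integral_neg, neg_neg] at h
  linarith

theorem one_sub_sq_rpow_le {r t : ℝ} (ht : t ∈ Icc (-1 : ℝ) 1) :
    (1 - t ^ 2) ^ r ≤ 1 + (1 - t) ^ r + (1 + t) ^ r := by
  have h₁ : 0 ≤ 1 - t := by linarith [ht.2]
  have h₂ : 0 ≤ 1 + t := by linarith [ht.1]
  have hp₁ := rpow_nonneg h₁ r
  have hp₂ := rpow_nonneg h₂ r
  rcases le_or_gt 0 r with hr | hr
  · linarith [rpow_le_one (x := 1 - t ^ 2) (by nlinarith) (by nlinarith) hr]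
  · rw [show 1 - t ^ 2 = (1 - t) * (1 + t) by ring, mul_rpow h₁ h₂]
    -- one of the two factors has base at least `1`, hence is at most `1`
    rcases le_total 0 t with h | h
    · nlinarith [rpow_le_one_of_one_le_of_nonpos (by linarith : 1 ≤ 1 + t) hr.le]
    · nlinarith [rpow_le_one_of_one_le_of_nonpos (by linarith : 1 ≤ 1 - t) hr.le]

theorem intervalIntegrable_one_sub_sq_rpow {r : ℝ} (hr : -1 < r) :
    IntervalIntegrable (fun t : ℝ => (1 - t ^ 2) ^ r) volume (-1) 1 := by
  have hdom : IntervalIntegrable (fun t : ℝ => 1 + (1 - t) ^ r + (1 + t) ^ r) volume (-1) 1 := by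
    refine (intervalIntegrable_const.add ?_).add ?_
    · convert (intervalIntegral.intervalIntegrable_rpow' (a := 2) (b := 0) hr).comp_sub_left 1
      <;> norm_num
    · convert (intervalIntegral.intervalIntegrable_rpow' (a := 0) (b := 2) hr).comp_add_left 1
      <;> norm_num
  have hmeas : Measurable fun t : ℝ => (1 - t ^ 2) ^ r := by fun_prop
  refine hdom.mono_fun' hmeas.aestronglyMeasurable ?_
  rw [uIoc_of_le (by norm_num)]
  refine (ae_restrict_iff' measurableSet_Ioc).mpr (ae_of_all _ fun t ht => ?_)
  have ht' : t ∈ Icc (-1 : ℝ) 1 := Ioc_subset_Icc_self ht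
  dsimp only
  rw [norm_of_nonneg (rpow_nonneg (by nlinarith [ht'.1, ht'.2]) r)]
  exact one_sub_sq_rpow_le ht'

theorem integral_one_sub_sq_rpow_pos {r : ℝ} (hr : -1 < r) :
    0 < ∫ t in (-1 : ℝ)..1, (1 - t ^ 2) ^ r :=
  intervalIntegral.intervalIntegral_pos_of_pos_on (intervalIntegrable_one_sub_sq_rpow hr)
    (fun _ ht => rpow_pos_of_pos (by nlinarith [ht.1, ht.2]) r) (by norm_num)

theorem hasDerivAt_integral_exp_mul {a b : ℝ} {g w : ℝ → ℝ} (hg : Continuous g)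
    (hw : IntervalIntegrable w volume a b) (κ₀ : ℝ) :
    HasDerivAt (fun κ => ∫ t in a..b, exp (κ * g t) * w t)
      (∫ t in a..b, g t * exp (κ₀ * g t) * w t) κ₀ := by
  obtain ⟨M, hM⟩ :=
    (isCompact_uIcc (a := a) (b := b)).exists_bound_of_continuousOn hg.continuousOn
  have hM₀ : 0 ≤ M := (norm_nonneg _).trans (hM a left_mem_uIcc)
  set K := (|κ₀| + 1) * M
  have hw_meas : AEStronglyMeasurable w (volume.restrict (uIoc a b)) := hw.def'.aestronglyMeasurable
  have hF_meas : ∀ κ : ℝ, AEStronglyMeasurable (fun t => exp (κ * g t) * w t)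
      (volume.restrict (uIoc a b)) := fun κ =>
    (by fun_prop : Continuous fun t => exp (κ * g t)).aestronglyMeasurable.mul hw_meas
  refine (intervalIntegral.hasDerivAt_integral_of_dominated_loc_of_deriv_le
    (F' := fun κ t => g t * exp (κ * g t) * w t) (bound := fun t => M * exp K * ‖w t‖)
    (Metric.ball_mem_nhds κ₀ one_pos) (Eventually.of_forall hF_meas)
    (hw.continuousOn_mul (by fun_prop)) ?_ ?_ (hw.norm.const_mul _) ?_).2
  · exact ((by fun_prop : Continuous fun t => g t * exp (κ₀ * g t)).aestronglyMeasurable.mul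
      hw_meas)
  · refine ae_of_all _ fun t ht κ hκ => ?_
    have hgt : |g t| ≤ M := by simpa using hM t (uIoc_subset_uIcc ht)
    have hκ' : |κ| ≤ |κ₀| + 1 := by
      have := abs_sub_abs_le_abs_sub κ κ₀
      rw [Metric.mem_ball, dist_eq_norm, norm_eq_abs] at hκ
      linarith
    have hexp : exp (κ * g t) ≤ exp K := exp_le_exp.mpr <| calc
      κ * g t ≤ |κ| * |g t| := by rw [← abs_mul]; exact le_abs_self _
      _ ≤ K := mul_le_mul hκ' hgt (abs_nonneg _) (by positivity)
    rw [norm_mul, norm_mul, norm_eq_abs (exp _), abs_of_pos (exp_pos _), norm_eq_abs (g t)]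
    gcongr
  · refine ae_of_all _ fun t _ κ _ => ?_
    simpa [mul_comm, mul_left_comm] using
      (((hasDerivAt_id κ).mul_const (g t)).exp.mul_const (w t))

/-- With `r = q / 2 - 1` this is the paper's `B(κ)`: the inner product of two independent uniform
points of `S^q` has density proportional to `(1 - t ^ 2) ^ (q / 2 - 1)` on `[-1, 1]`. -/
def expKernelMean (r κ : ℝ) : ℝ :=
  (∫ t in (-1 : ℝ)..1, exp (κ * (t - 1)) * (1 - t ^ 2) ^ r) / ∫ t in (-1 : ℝ)..1, (1 - t ^ 2) ^ r

theorem expKernelMean_zero {r : ℝ} (hr : -1 < r) : expKernelMean r 0 = 1 := by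
  simp [expKernelMean, (integral_one_sub_sq_rpow_pos hr).ne']

theorem hasDerivAt_expKernelMean_zero {r : ℝ} (hr : -1 < r) :
    HasDerivAt (expKernelMean r) (-1) 0 := by
  have hw := intervalIntegrable_one_sub_sq_rpow hr
  have hodd : ∫ t in (-1 : ℝ)..1, t * (1 - t ^ 2) ^ r = 0 :=
    intervalIntegral.integral_eq_zero_of_odd (fun t => by rw [neg_sq, neg_mul]) 1
  have hderiv : ∫ t in (-1 : ℝ)..1, (t - 1) * exp (0 * (t - 1)) * (1 - t ^ 2) ^ r
      = -∫ t in (-1 : ℝ)..1, (1 - t ^ 2) ^ r := by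
    simp only [zero_mul, exp_zero, mul_one, sub_mul, one_mul]
    have hw' : IntervalIntegrable (fun t : ℝ => t * (1 - t ^ 2) ^ r) volume (-1) 1 :=
      hw.continuousOn_mul continuousOn_id
    rw [intervalIntegral.integral_sub hw' hw, hodd, zero_sub]
  have := (hasDerivAt_integral_exp_mul (g := fun t => t - 1) (by fun_prop) hw 0).div_const
    (∫ t in (-1 : ℝ)..1, (1 - t ^ 2) ^ r)
  rwa [hderiv, neg_div, div_self (integral_one_sub_sq_rpow_pos hr).ne'] at this

/-- The paper's smooth maximum statistic `T(κ)`, for `c i j = ⟪x i, x j⟫`. -/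
def smoothMaximum {n : ℕ} (r : ℝ) (c : Fin n → Fin n → ℝ) (κ : ℝ) : ℝ :=
  (2 / n) * ∑ p ∈ univ.filter (fun p : Fin n × Fin n => p.1 < p.2), exp (κ * (c p.1 p.2 - 1))
    - ((n : ℝ) - 1) * expKernelMean r κ

theorem two_div_mul_card_filter_lt {n : ℕ} (hn : n ≠ 0) :
    (2 / n : ℝ) * #(univ.filter fun p : Fin n × Fin n => p.1 < p.2) = n - 1 := by
  rw [Fintype.card_product_filter_lt, Fintype.card_fin, Nat.cast_choose_two]
  field_simp

theorem smoothMaximum_eq_sum {n : ℕ} (hn : n ≠ 0) (r : ℝ) (c : Fin n → Fin n → ℝ) :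
    smoothMaximum r c = fun κ => (2 / n) *
      ∑ p ∈ univ.filter (fun p : Fin n × Fin n => p.1 < p.2),
        (exp (κ * (c p.1 p.2 - 1)) - expKernelMean r κ) := by
  ext κ
  rw [smoothMaximum, sum_sub_distrib, sum_const, nsmul_eq_mul, mul_sub, ← mul_assoc,
    two_div_mul_card_filter_lt hn]

theorem smoothMaximum_zero {n : ℕ} (hn : n ≠ 0) {r : ℝ} (hr : -1 < r) (c : Fin n → Fin n → ℝ) :
    smoothMaximum r c 0 = 0 := by
  simp [smoothMaximum_eq_sum hn, expKernelMean_zero hr]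

theorem hasDerivAt_smoothMaximum_zero {n : ℕ} (hn : n ≠ 0) {r : ℝ} (hr : -1 < r)
    (c : Fin n → Fin n → ℝ) :
    HasDerivAt (smoothMaximum r c)
      ((2 / n) * ∑ p ∈ univ.filter (fun p : Fin n × Fin n => p.1 < p.2), c p.1 p.2) 0 := by
  rw [smoothMaximum_eq_sum hn]
  refine (HasDerivAt.fun_sum fun p _ => ?_).const_mul _
  simpa using ((hasDerivAt_id (0 : ℝ)).mul_const (c p.1 p.2 - 1)).exp.fun_sub
    (hasDerivAt_expKernelMean_zero hr)

/-- Proposition 1(i): as `κ → 0⁺`, the (monotonically transformed) smooth maximum statistic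
converges to the Rayleigh statistic. -/
theorem smooth_maximum_tendsto_rayleigh (q n : ℕ) (hq : 1 ≤ q) (hn : 1 ≤ n)
    (x : Fin n → EuclideanSpace ℝ (Fin (q + 1))) (hx : ∀ i, ‖x i‖ = 1) :
    Tendsto (fun κ : ℝ =>
        ((q : ℝ) + 1) * ((Real.exp κ / κ) *
          ((2 / n) * ∑ p ∈ Finset.univ.filter (fun p : Fin n × Fin n => p.1 < p.2),
              Real.exp (κ * ((inner ℝ (x p.1) (x p.2) : ℝ) - 1))
            - ((n : ℝ) - 1) *
              ((∫ t in (-1 : ℝ)..1, Real.exp (κ * (t - 1)) * (1 - t ^ 2) ^ ((q : ℝ) / 2 - 1)) /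
                (∫ t in (-1 : ℝ)..1, (1 - t ^ 2) ^ ((q : ℝ) / 2 - 1))))
          + 1))
      (𝓝[>] 0)
      (𝓝 ((((q : ℝ) + 1) / n) * ∑ i : Fin n, ∑ j : Fin n, (inner ℝ (x i) (x j) : ℝ))) := by
  have hr : -1 < (q : ℝ) / 2 - 1 := by
    have : (1 : ℝ) ≤ q := by exact_mod_cast hq
    linarith
  have hn₀ : n ≠ 0 := by omega
  set c : Fin n → Fin n → ℝ := fun i j => inner ℝ (x i) (x j)
  have hT : Tendsto (slope (smoothMaximum ((q : ℝ) / 2 - 1) c) 0) (𝓝[>] 0) _ :=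
    (hasDerivAt_iff_tendsto_slope.mp (hasDerivAt_smoothMaximum_zero hn₀ hr c)).mono_left
      (nhdsWithin_mono 0 fun κ (hκ : 0 < κ) => hκ.ne')
  have hexp : Tendsto exp (𝓝[>] 0) (𝓝 1) :=
    (continuous_exp.tendsto' 0 1 exp_zero).mono_left nhdsWithin_le_nhds
  have hlim := ((hexp.mul hT).add_const 1).const_mul ((q : ℝ) + 1)
  have hrayleigh : ∑ i, ∑ j, c i j = 2 * ∑ p ∈ univ.filter (fun p : Fin n × Fin n => p.1 < p.2),
      c p.1 p.2 + n := by
    rw [sum_sum_eq_two_nsmul_sum_lt_add_sum_diag c fun i j => real_inner_comm _ _, two_nsmul,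
      two_mul]
    simp [c, hx]
  convert hlim using 2
  · rw [slope_def_field, smoothMaximum_zero hn₀ hr, sub_zero, sub_zero, smoothMaximum,
      expKernelMean]
    ring
  · rw [hrayleigh]
    field_simp
end
end

section
/- Let u, v be points of the unit circle S¹ ⊂ ℝ², let ν₁ be the uniform probability measure on S¹, and let k, m ≥ 0 be integers. Then ∫_{S¹} T_k(⟨γ, u⟩)·T_m(⟨γ, v⟩) dν₁(γ) = δ_{k,m} · ((1 + δ_{k,0})/2) · T_k(⟨u, v⟩), where δ is the Kronecker delta. -/
open MeasureTheory Filter Topology Real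

noncomputable section

/-- The uniform (rotation-invariant) probability measure on the unit circle `S¹ ⊆ ℝ²`,
obtained by normalizing the arc-length measure. -/
noncomputable def unifCircle : Measure (Metric.sphere (0 : EuclideanSpace ℝ (Fin 2)) 1) :=
  (((volume : Measure (EuclideanSpace ℝ (Fin 2))).toSphere Set.univ)⁻¹) •
    (volume : Measure (EuclideanSpace ℝ (Fin 2))).toSphere

/-! Writing `γ = (cos θ, sin θ)`, `u = (cos a, sin a)`, `v = (cos b, sin b)`, the integrand becomes
`cos (k (θ - a)) cos (m (θ - b))`, so the claim is the orthogonality of the cosines on a period,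
provided `unifCircle` is `dθ / 2π` on `(-π, π)`. That change of variables comes from integrating
`g (x / ‖x‖) * f ‖x‖` over the plane in two ways: through Mathlib's decomposition of Lebesgue
measure as `volume.toSphere × r dr`, and through the usual polar coordinates. -/

open Set Metric

def circlePoint (θ : ℝ) : EuclideanSpace ℝ (Fin 2) := !₂[cos θ, sin θ]

lemma norm_circlePoint (θ : ℝ) : ‖circlePoint θ‖ = 1 := by
  simp [circlePoint, EuclideanSpace.norm_eq, Fin.sum_univ_two]

lemma inner_circlePoint (θ φ : ℝ) : inner ℝ (circlePoint θ) (circlePoint φ) = cos (θ - φ) := by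
  simp [circlePoint, PiLp.inner_apply, Fin.sum_univ_two, cos_sub]
  ring

lemma orthonormalBasisOneI_repr_polarCoord_symm (p : ℝ × ℝ) :
    Complex.orthonormalBasisOneI.repr (Complex.polarCoord.symm p) = p.1 • circlePoint p.2 := by
  ext i
  fin_cases i <;> simp [circlePoint, Complex.cos_ofReal_re, Complex.sin_ofReal_re]

lemma exists_circlePoint_eq (u : sphere (0 : EuclideanSpace ℝ (Fin 2)) 1) :
    ∃ θ, circlePoint θ = u := by
  set z := Complex.orthonormalBasisOneI.repr.symm u
  have hz : ‖z‖ = 1 := by simp only [z, LinearIsometryEquiv.norm_map, norm_eq_of_mem_sphere]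
  have hpolar : Complex.polarCoord.symm (‖z‖, z.arg) = z := by
    rw [Complex.polarCoord_symm_apply]
    push_cast
    exact Complex.norm_mul_cos_add_sin_mul_I z
  refine ⟨z.arg, ?_⟩
  have := orthonormalBasisOneI_repr_polarCoord_symm (‖z‖, z.arg)
  rwa [hpolar, LinearIsometryEquiv.apply_symm_apply, hz, one_smul, eq_comm] at this

lemma integral_volumeIoiPow (n : ℕ) (f : ℝ → ℝ) :
    ∫ r, f r ∂Measure.volumeIoiPow n = ∫ r in Ioi 0, r ^ n * f r := by
  rw [Measure.volumeIoiPow, integral_withDensity_eq_integral_toReal_smul₀ (by fun_prop)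
      (ae_of_all _ fun _ => ENNReal.ofReal_lt_top),
    integral_subtype_comap measurableSet_Ioi (fun r => (ENNReal.ofReal (r ^ n)).toReal • f r)]
  refine setIntegral_congr_fun measurableSet_Ioi fun r hr => ?_
  rw [ENNReal.toReal_ofReal (pow_nonneg (le_of_lt hr) n), smul_eq_mul]

lemma integral_comp_normalize_mul_comp_norm {E : Type*} [NormedAddCommGroup E] [NormedSpace ℝ E]
    [MeasurableSpace E] [BorelSpace E] [FiniteDimensional ℝ E] [Nontrivial E]
    (μ : Measure E) [μ.IsAddHaarMeasure] (g : E → ℝ) (f : ℝ → ℝ) :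
    ∫ x, g (‖x‖⁻¹ • x) * f ‖x‖ ∂μ =
      (∫ γ, g γ ∂μ.toSphere) * ∫ r in Ioi 0, r ^ (Module.finrank ℝ E - 1) * f r := by
  conv_lhs => rw [← restrict_compl_singleton (μ := μ) 0,
    ← integral_subtype_comap (measurableSet_singleton _).compl (fun x => g (‖x‖⁻¹ • x) * f ‖x‖)]
  rw [← integral_volumeIoiPow, ← integral_prod_mul,
    ← (μ.measurePreserving_homeomorphUnitSphereProd).integral_comp
      (Homeomorph.measurableEmbedding _)]
  simp only [homeomorphUnitSphereProd_apply_fst_coe, homeomorphUnitSphereProd_apply_snd_coe]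

lemma integral_comp_normalize_mul_comp_norm_fin_two (g : EuclideanSpace ℝ (Fin 2) → ℝ)
    (f : ℝ → ℝ) :
    ∫ x, g (‖x‖⁻¹ • x) * f ‖x‖ =
      (∫ θ in Ioo (-π) π, g (circlePoint θ)) * ∫ r in Ioi 0, r * f r := by
  have hpolar : EqOn (fun p : ℝ × ℝ => p.1 • (g (‖p.1 • circlePoint p.2‖⁻¹ • p.1 • circlePoint p.2)
      * f ‖p.1 • circlePoint p.2‖)) (fun p => (p.1 * f p.1) * g (circlePoint p.2))
      (Ioi 0 ×ˢ Ioo (-π) π) := by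
    rintro ⟨r, θ⟩ ⟨hr, -⟩
    have hr : 0 < r := hr
    simp only [norm_smul, norm_circlePoint, Real.norm_of_nonneg hr.le, mul_one, smul_smul,
      inv_mul_cancel₀ hr.ne', one_smul, smul_eq_mul]
    ring
  rw [← Complex.orthonormalBasisOneI.repr.measurePreserving.integral_comp
      Complex.orthonormalBasisOneI.repr.toHomeomorph.measurableEmbedding,
    ← Complex.integral_comp_polarCoord_symm]
  simp only [orthonormalBasisOneI_repr_polarCoord_symm]
  rw [polarCoord_target, setIntegral_congr_fun (measurableSet_Ioi.prod measurableSet_Ioo) hpolar,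
    Measure.volume_eq_prod,
    setIntegral_prod_mul (fun r => r * f r) (fun θ => g (circlePoint θ)), mul_comm]

lemma integral_Ioi_mul_indicator_Ioo :
    ∫ r in Ioi (0 : ℝ), r * (Ioo (0 : ℝ) 1).indicator 1 r = 2⁻¹ := by
  have h : (fun r : ℝ => r * (Ioo (0 : ℝ) 1).indicator 1 r) = (Ioo 0 1).indicator fun r => r := by
    ext r; simp [indicator_apply]
  rw [h, setIntegral_indicator measurableSet_Ioo, inter_eq_self_of_subset_right Ioo_subset_Ioi_self,
    ← integral_Ioc_eq_integral_Ioo, ← intervalIntegral.integral_of_le zero_le_one, integral_id]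
  norm_num

lemma integral_toSphere_fin_two (g : EuclideanSpace ℝ (Fin 2) → ℝ) :
    ∫ γ, g γ ∂(volume : Measure (EuclideanSpace ℝ (Fin 2))).toSphere =
      ∫ θ in Ioo (-π) π, g (circlePoint θ) := by
  -- any radial weight `f` with `∫ r in Ioi 0, r * f r ≠ 0` would do
  have h := integral_comp_normalize_mul_comp_norm volume g ((Ioo (0 : ℝ) 1).indicator 1)
  rw [integral_comp_normalize_mul_comp_norm_fin_two, finrank_euclideanSpace_fin] at h
  simpa [integral_Ioi_mul_indicator_Ioo] using h.symm

lemma toSphere_real_univ_fin_two :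
    (volume : Measure (EuclideanSpace ℝ (Fin 2))).toSphere.real univ = 2 * π := by
  simp [measureReal_def, EuclideanSpace.volume_ball_fin_two, pi_pos.le]

lemma integral_unifCircle (g : EuclideanSpace ℝ (Fin 2) → ℝ) :
    ∫ γ, g γ ∂unifCircle = (2 * π)⁻¹ * ∫ θ in -π..π, g (circlePoint θ) := by
  rw [unifCircle, integral_smul_measure, ENNReal.toReal_inv, ← measureReal_def,
    toSphere_real_univ_fin_two, integral_toSphere_fin_two,
    intervalIntegral.integral_of_le (neg_le_self pi_pos.le), integral_Ioc_eq_integral_Ioo,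
    smul_eq_mul]

lemma integral_cos_int_mul_add (n : ℤ) (c : ℝ) :
    ∫ θ in -π..π, cos (n * θ + c) = if n = 0 then 2 * π * cos c else 0 := by
  split_ifs with hn
  · simp only [hn, Int.cast_zero, zero_mul, zero_add, intervalIntegral.integral_const, smul_eq_mul]
    ring
  · have hn' : (n : ℝ) ≠ 0 := Int.cast_ne_zero.2 hn
    rw [intervalIntegral.integral_comp_mul_add cos hn' c, integral_cos,
      show n * π + c = n * -π + c + n * (2 * π) by ring, sin_add_int_mul_two_pi, sub_self,
      smul_zero]

lemma integral_cos_mul_cos (k m : ℕ) (a b : ℝ) :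
    ∫ θ in -π..π, cos (k * (θ - a)) * cos (m * (θ - b)) =
      if k = m then (if k = 0 then 2 * π else π) * cos (k * (a - b)) else 0 := by
  have hsum (θ : ℝ) : cos (k * (θ - a)) * cos (m * (θ - b)) =
      (cos (((k - m : ℤ) : ℝ) * θ + (m * b - k * a)) +
        cos (((k + m : ℤ) : ℝ) * θ + -(k * a + m * b))) / 2 := by
    rw [eq_div_iff two_ne_zero, mul_comm, ← mul_assoc, two_mul_cos_mul_cos]
    push_cast
    ring_nf
  simp_rw [hsum]
  rw [intervalIntegral.integral_div, intervalIntegral.integral_add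
      ((by fun_prop : Continuous _).intervalIntegrable _ _)
      ((by fun_prop : Continuous _).intervalIntegrable _ _),
    integral_cos_int_mul_add, integral_cos_int_mul_add]
  rcases eq_or_ne k m with rfl | hkm
  · rcases eq_or_ne k 0 with rfl | hk
    · simp
    · simp only [sub_self, add_self_eq_zero, Int.natCast_eq_zero, hk, if_true, if_false]
      rw [← cos_neg]
      ring_nf
  · simp [hkm, show (k : ℤ) - m ≠ 0 by omega, show (k : ℤ) + m ≠ 0 by omega]

/-- Double products of Chebyshev polynomials over the uniform measure on the circle
(circular case of Lemma 1 of the Supplementary Materials). -/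
theorem integral_chebyshev_double_product
    (u v : Metric.sphere (0 : EuclideanSpace ℝ (Fin 2)) 1) (k m : ℕ) :
    ∫ γ, (Polynomial.Chebyshev.T ℝ k).eval
          (inner ℝ (γ : EuclideanSpace ℝ (Fin 2)) (u : EuclideanSpace ℝ (Fin 2)) : ℝ) *
        (Polynomial.Chebyshev.T ℝ m).eval
          (inner ℝ (γ : EuclideanSpace ℝ (Fin 2)) (v : EuclideanSpace ℝ (Fin 2)) : ℝ)
        ∂unifCircle
      = (if k = m then (1 : ℝ) else 0) * ((1 + if k = 0 then (1 : ℝ) else 0) / 2) *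
          (Polynomial.Chebyshev.T ℝ k).eval
            (inner ℝ (u : EuclideanSpace ℝ (Fin 2)) (v : EuclideanSpace ℝ (Fin 2)) : ℝ) := by
  obtain ⟨a, ha⟩ := exists_circlePoint_eq u
  obtain ⟨b, hb⟩ := exists_circlePoint_eq v
  rw [← ha, ← hb, integral_unifCircle fun x => (Polynomial.Chebyshev.T ℝ k).eval
    (inner ℝ x (circlePoint a)) * (Polynomial.Chebyshev.T ℝ m).eval (inner ℝ x (circlePoint b))]
  simp only [inner_circlePoint, Polynomial.Chebyshev.T_real_cos, Int.cast_natCast]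
  rw [integral_cos_mul_cos]
  split_ifs <;> field_simp <;> ring
end
end
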